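/- Define the characteristic number of a word w in the alphabet {c} ∪ {blocks h[j,i]} as χ(w) = (number of occurrences of c) − |B(w) − R(w)|, where B(w) is the number of blue blocks (both endpoints odd) and R(w) the number of red blocks (both endpoints even). Then for any single rewriting step u → v using one of the oriented relations (1)–(7) of the block presentation of the Kauffman monoid, χ(v) − χ(u) ∈ {0, 2}. -/
import Mathlib


namespace KauffmanRewriting

/-- Letters of the block alphabet: `c` and the blocks `h[j,i]` (meaningful for `i ≤ j`). -/
inductive BL
  | c : BL
  | blk (j i : ℕ) : BL
deriving DecidableEq

def isC : BL → Bool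
  | .c => true
  | _ => false

/-- A block is blue if both endpoints are odd. -/
def isBlue : BL → Bool
  | .blk j i => j % 2 == 1 && i % 2 == 1
  | _ => false

/-- A block is red if both endpoints are even. -/
def isRed : BL → Bool
  | .blk j i => j % 2 == 0 && i % 2 == 0
  | _ => false

/-- The characteristic number `χ(w) = c(w) - |B(w) - R(w)|` of a word in the block alphabet. -/
def chi (w : List BL) : ℤ :=
  ((w.filter isC).length : ℤ) -
    |((w.filter isBlue).length : ℤ) - ((w.filter isRed).length : ℤ)|

/-- The oriented relations (1)–(7) of the block presentation of the Kauffman monoid `K n`,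
where all block subscripts satisfy `1 ≤ i ≤ j < n` and `1 ≤ k ≤ l < n`. -/
inductive RW (n : ℕ) : List BL → List BL → Prop
  | r1 (i j k l : ℕ) : 1 ≤ i → i ≤ j → j < n → 1 ≤ k → k ≤ l → l < n → l + 2 ≤ i →
      RW n [.blk j i, .blk l k] [.blk l k, .blk j i]
  | r2 (i j k l : ℕ) : 1 ≤ i → i ≤ j → j < n → 1 ≤ k → k ≤ l → l < n → k ≤ j →
      (i = l + 1 ∨ l = i + 1) → RW n [.blk j i, .blk l k] [.blk j k]
  | r3 (i j k : ℕ) : 1 ≤ k → k ≤ i → i ≤ j → j < n →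
      RW n [.blk j i, .blk i k] [.c, .blk j k]
  | r4 (i j : ℕ) : 1 ≤ i → i ≤ j → j < n →
      RW n [.blk j i, .c] [.c, .blk j i]
  | r5 (i j k l : ℕ) : 1 ≤ i → i ≤ j → j < n → 1 ≤ k → k ≤ l → l < n →
      i + 2 ≤ l → l ≤ j → k ≤ i →
      RW n [.blk j i, .blk l k] [.blk (l - 2) k, .blk j (i + 2)]
  | r6 (i j k l : ℕ) : 1 ≤ i → i ≤ j → j < n → 1 ≤ k → k ≤ l → l < n →
      i + 2 ≤ l → j < l → k ≤ i →
      RW n [.blk j i, .blk l k] [.blk j k, .blk l (i + 2)]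
  | r7 (i j k l : ℕ) : 1 ≤ i → i ≤ j → j < n → 1 ≤ k → k ≤ l → l < n →
      i + 2 ≤ l → l ≤ j → i < k →
      RW n [.blk j i, .blk l k] [.blk (l - 2) i, .blk j k]

set_option maxHeartbeats 2000000 in
/-- For any single rewriting step `u → v` (replacing one occurrence of a
left-hand side of one of the oriented relations (1)–(7) by the corresponding right-hand
side), `χ(v) - χ(u) ∈ {0, 2}`. -/
theorem chi_step (n : ℕ) (u v p s x y : List BL) (hxy : RW n x y)
    (hu : u = p ++ x ++ s) (hv : v = p ++ y ++ s) :
    chi v - chi u = 0 ∨ chi v - chi u = 2 := by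
  subst hu hv
  cases hxy with
  | r1 i j k l h1 h2 h3 h4 h5 h6 h7 =>
    rcases Nat.mod_two_eq_zero_or_one i with hi|hi <;>
    rcases Nat.mod_two_eq_zero_or_one j with hj|hj <;>
    rcases Nat.mod_two_eq_zero_or_one k with hk|hk <;>
    rcases Nat.mod_two_eq_zero_or_one l with hl|hl <;>
    simp only [chi, List.filter_append, List.length_append, List.filter_cons,
      List.filter_nil, isC, isBlue, isRed, hi, hj, hk, hl] <;>
    simp <;> simp only [Int.abs_eq_natAbs] <;> omega
  | r2 i j k l h1 h2 h3 h4 h5 h6 h7 h8 =>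
    rcases Nat.mod_two_eq_zero_or_one i with hi|hi <;>
    rcases Nat.mod_two_eq_zero_or_one j with hj|hj <;>
    rcases Nat.mod_two_eq_zero_or_one k with hk|hk <;>
    rcases Nat.mod_two_eq_zero_or_one l with hl|hl <;>
    simp only [chi, List.filter_append, List.length_append, List.filter_cons,
      List.filter_nil, isC, isBlue, isRed, hi, hj, hk, hl] <;>
    simp <;> simp only [Int.abs_eq_natAbs] <;> omega
  | r3 i j k h1 h2 h3 h4 =>
    rcases Nat.mod_two_eq_zero_or_one i with hi|hi <;>
    rcases Nat.mod_two_eq_zero_or_one j with hj|hj <;>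
    rcases Nat.mod_two_eq_zero_or_one k with hk|hk <;>
    simp only [chi, List.filter_append, List.length_append, List.filter_cons,
      List.filter_nil, isC, isBlue, isRed, hi, hj, hk] <;>
    simp <;> simp only [Int.abs_eq_natAbs] <;> omega
  | r4 i j h1 h2 h3 =>
    rcases Nat.mod_two_eq_zero_or_one i with hi|hi <;>
    rcases Nat.mod_two_eq_zero_or_one j with hj|hj <;>
    simp only [chi, List.filter_append, List.length_append, List.filter_cons,
      List.filter_nil, isC, isBlue, isRed, hi, hj] <;>
    simp <;> simp only [Int.abs_eq_natAbs] <;> omega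
  | r5 i j k l h1 h2 h3 h4 h5 h6 h7 h8 h9 =>
    have e1 : (l - 2) % 2 = l % 2 := by omega
    have e2 : (i + 2) % 2 = i % 2 := by omega
    rcases Nat.mod_two_eq_zero_or_one i with hi|hi <;>
    rcases Nat.mod_two_eq_zero_or_one j with hj|hj <;>
    rcases Nat.mod_two_eq_zero_or_one k with hk|hk <;>
    rcases Nat.mod_two_eq_zero_or_one l with hl|hl <;>
    simp only [chi, List.filter_append, List.length_append, List.filter_cons,
      List.filter_nil, isC, isBlue, isRed, hi, hj, hk, hl, e1, e2] <;>
    simp <;> simp only [Int.abs_eq_natAbs] <;> omega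
  | r6 i j k l h1 h2 h3 h4 h5 h6 h7 h8 h9 =>
    have e2 : (i + 2) % 2 = i % 2 := by omega
    rcases Nat.mod_two_eq_zero_or_one i with hi|hi <;>
    rcases Nat.mod_two_eq_zero_or_one j with hj|hj <;>
    rcases Nat.mod_two_eq_zero_or_one k with hk|hk <;>
    rcases Nat.mod_two_eq_zero_or_one l with hl|hl <;>
    simp only [chi, List.filter_append, List.length_append, List.filter_cons,
      List.filter_nil, isC, isBlue, isRed, hi, hj, hk, hl, e2] <;>
    simp <;> simp only [Int.abs_eq_natAbs] <;> omega
  | r7 i j k l h1 h2 h3 h4 h5 h6 h7 h8 h9 =>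
    have e1 : (l - 2) % 2 = l % 2 := by omega
    rcases Nat.mod_two_eq_zero_or_one i with hi|hi <;>
    rcases Nat.mod_two_eq_zero_or_one j with hj|hj <;>
    rcases Nat.mod_two_eq_zero_or_one k with hk|hk <;>
    rcases Nat.mod_two_eq_zero_or_one l with hl|hl <;>
    simp only [chi, List.filter_append, List.length_append, List.filter_cons,
      List.filter_nil, isC, isBlue, isRed, hi, hj, hk, hl, e1] <;>
    simp <;> simp only [Int.abs_eq_natAbs] <;> omega


end KauffmanRewriting
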